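/- arXiv:2204.01445 — 2 statements merged into one kernel-verified Lean document; each statement's English description precedes it below -/
import Mathlib

section
/- Functional free moment–cumulant relation: for every m ∈ G^1 there exists a unique κ ∈ G^0 such that m = 1 + κ(x m(x)), where κ(x m(x)) denotes the shifted substitution of m into κ. (The series κ is the multivariate generating series of free cumulants associated to the moment series m.) -/
/-- Words over the alphabet of positive integers. -/
abbrev Word : Type := List ℕ+

variable {A : Type*}

/-- The constant series `1`: coefficient `1` on the empty word, `0` elsewhere. -/
def one [CommRing A] : Word → A := fun w => if w = [] then 1 else 0

/-- Cauchy product of noncommutative series: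
`(f·g)(w) = Σ f(u) g(v)` over all factorizations `w = u ++ v`. -/
def cauchy [CommRing A] (f g : Word → A) : Word → A := fun w =>
  ∑ k ∈ Finset.range (w.length + 1), f (w.take k) * g (w.drop k)

/-- The subword of `w` consisting of the letters at positions in `S` (in increasing order). -/
def subword (w : Word) (S : Finset ℕ) : Word :=
  ((w.zipIdx.map Prod.swap).filter (fun p => decide (p.1 ∈ S))).map Prod.snd

/-- The (possibly empty) factor of `w` occupying the positions strictly between `s` and the
next element of `S` after `s` (or the end of the word if there is no such element). -/
def gapAfter (w : Word) (S : Finset ℕ) (s : ℕ) : Word :=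
  ((w.zipIdx.map Prod.swap).filter (fun p => decide (s < p.1 ∧ ∀ j ∈ S, j ≤ s ∨ p.1 < j))).map Prod.snd

/-- Shifted substitution `f(xg(x))`: its constant coefficient is `f(∅)`, and its coefficient
on a nonempty word `w = a_1⋯a_n` is the sum, over subsets `S = {s_1<⋯<s_k}` of the positions
of `w` containing the first position, of `f(a_{s_1}⋯a_{s_k})·g(w_{(s_1,s_2)})⋯g(w_{(s_k,n+1)})`,
where `w_{(s_j,s_{j+1})}` is the factor of `w` strictly between positions `s_j` and `s_{j+1}`. -/
def subst [CommRing A] (f g : Word → A) : Word → A := fun w =>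
  if w = [] then f []
  else ∑ S ∈ (Finset.range w.length).powerset.filter (fun S => 0 ∈ S),
    f (subword w S) * ∏ s ∈ S, g (gapAfter w S s)

/-- Shifted composition `f • g := g · f(xg(x))`. -/
def bullet [CommRing A] (f g : Word → A) : Word → A := cauchy g (subst f g)


/-!
For `g(∅) = 1`, the coefficient of `f(xg(x))` on a nonempty word `w` is `f(w)` — the term where
`S` is the set of all positions, so that every gap is empty — plus terms involving `f` only
on strictly shorter subwords of `w`. Thus `f ↦ f(xg(x))` is unitriangular with respect to word
length, hence bijective, and `κ` is the unique solution of `κ(xm(x)) = m - 1`, computed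
recursively.
-/

def properPositionSets (w : Word) : Finset (Finset ℕ) :=
  ((Finset.range w.length).powerset.filter (fun S => 0 ∈ S)).erase (Finset.range w.length)

lemma mem_zipIdx_swap_fst_lt {w : Word} {p : ℕ × ℕ+} (hp : p ∈ w.zipIdx.map Prod.swap) :
    p.1 < w.length := by
  obtain ⟨q, hq, rfl⟩ := List.mem_map.mp hp
  exact (List.getElem?_eq_some_iff.mp (List.mem_zipIdx_iff_getElem?.mp hq)).1

lemma subword_range_length (w : Word) : subword w (Finset.range w.length) = w := by
  rw [subword, List.filter_eq_self.mpr, List.map_map]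
  · exact List.zipIdx_map_fst 0 w
  intro p hp
  simpa using mem_zipIdx_swap_fst_lt hp

lemma gapAfter_range_length (w : Word) (s : ℕ) : gapAfter w (Finset.range w.length) s = [] := by
  rw [gapAfter, List.filter_eq_nil_iff.mpr, List.map_nil]
  intro p hp
  have hp_lt := mem_zipIdx_swap_fst_lt hp
  simp only [decide_eq_true_eq, not_and]
  intro hs hall
  rcases hall p.1 (Finset.mem_range.mpr hp_lt) with h | h <;> omega

lemma length_subword_lt {w : Word} {S : Finset ℕ} (hS : S ⊆ Finset.range w.length)
    (hne : S ≠ Finset.range w.length) : (subword w S).length < w.length := by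
  obtain ⟨i, hi, hiS⟩ : ∃ i ∈ Finset.range w.length, i ∉ S :=
    Finset.not_subset.mp fun h => hne (hS.antisymm h)
  have hi_lt := Finset.mem_range.mp hi
  have hmem : (i, w[i]) ∈ w.zipIdx.map Prod.swap :=
    List.mem_map.mpr ⟨(w[i], i), List.mem_zipIdx_iff_getElem?.mpr (by simp [hi_lt]), rfl⟩
  have hfilter_ne : ((w.zipIdx.map Prod.swap).filter (fun p => decide (p.1 ∈ S))).length ≠
      (w.zipIdx.map Prod.swap).length := fun h =>
    hiS (by simpa using List.length_filter_eq_length_iff.mp h _ hmem)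
  simpa [subword] using (List.length_filter_le _ _).lt_of_ne hfilter_ne

lemma length_subword_lt_of_mem_properPositionSets {w : Word} {S : Finset ℕ}
    (hS : S ∈ properPositionSets w) : (subword w S).length < w.length := by
  rw [properPositionSets, Finset.mem_erase, Finset.mem_filter, Finset.mem_powerset] at hS
  exact length_subword_lt hS.2.1 hS.1

lemma properPositionSets_nil : properPositionSets [] = ∅ := by
  decide

section Subst

variable [CommRing A]

lemma subst_nil (f g : Word → A) : subst f g [] = f [] := if_pos rfl

lemma subst_eq_add_sum (f : Word → A) {g : Word → A} (hg : g [] = 1) {w : Word}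
    (hw : w ≠ []) :
    subst f g w =
      f w + ∑ S ∈ properPositionSets w, f (subword w S) * ∏ s ∈ S, g (gapAfter w S s) := by
  have hfull : Finset.range w.length ∈
      (Finset.range w.length).powerset.filter (fun S => 0 ∈ S) := by
    simpa using List.length_pos_iff.mpr hw
  rw [subst, if_neg hw, ← Finset.add_sum_erase _ _ hfull, subword_range_length]
  simp [gapAfter_range_length, hg, properPositionSets]

/-- The solution `f` of `subst f g = h`, by recursion on the length of the word. -/
def substSolve (g h : Word → A) (w : Word) : A :=
  h w - ∑ S ∈ (properPositionSets w).attach,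
    substSolve g h (subword w S.1) * ∏ s ∈ S.1, g (gapAfter w S.1 s)
termination_by w.length
decreasing_by exact length_subword_lt_of_mem_properPositionSets S.2

lemma substSolve_eq (g h : Word → A) (w : Word) :
    substSolve g h w = h w - ∑ S ∈ properPositionSets w,
      substSolve g h (subword w S) * ∏ s ∈ S, g (gapAfter w S s) := by
  rw [substSolve]
  exact congrArg _ (Finset.sum_attach (properPositionSets w)
    fun S => substSolve g h (subword w S) * ∏ s ∈ S, g (gapAfter w S s))

lemma substSolve_nil (g h : Word → A) : substSolve g h [] = h [] := by
  rw [substSolve_eq, properPositionSets_nil, Finset.sum_empty, sub_zero]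

lemma subst_substSolve {g : Word → A} (hg : g [] = 1) (h : Word → A) :
    subst (substSolve g h) g = h := by
  funext w
  rcases eq_or_ne w [] with rfl | hw
  · rw [subst_nil, substSolve_nil]
  · rw [subst_eq_add_sum _ hg hw, substSolve_eq]
    ring

lemma subst_left_injective {g : Word → A} (hg : g [] = 1) :
    Function.Injective fun f : Word → A => subst f g := by
  intro f f' hff'
  funext w
  induction hn : w.length using Nat.strong_induction_on generalizing w with
  | _ n ih =>
    have hw_eq := congr_fun hff' w
    rcases eq_or_ne w [] with rfl | hw
    · simpa only [subst_nil] using hw_eq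
    · have hsum :
          ∑ S ∈ properPositionSets w, f (subword w S) * ∏ s ∈ S, g (gapAfter w S s) =
            ∑ S ∈ properPositionSets w, f' (subword w S) * ∏ s ∈ S, g (gapAfter w S s) :=
        Finset.sum_congr rfl fun S hS => by
          rw [ih _ (hn ▸ length_subword_lt_of_mem_properPositionSets hS) _ rfl]
      simp only [subst_eq_add_sum _ hg hw, hsum] at hw_eq
      exact add_right_cancel hw_eq

end Subst

theorem stmt11_general [Field A] (m : Word → A) (hm : m [] = 1) :
    ∃! κ : Word → A, κ [] = 0 ∧ ∀ w, m w = one w + subst κ m w := by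
  have hsolve := subst_substSolve hm (m - one)
  refine ⟨substSolve m (m - one), ⟨?_, fun w => ?_⟩, ?_⟩
  · simp [substSolve_nil, hm, one]
  · rw [hsolve]
    simp
  · rintro κ ⟨-, hκ⟩
    refine subst_left_injective hm (Eq.trans ?_ hsolve.symm)
    funext w
    simp [hκ w]

/-- functional free moment–cumulant relation.  For every `m ∈ G^1` there is a
unique `κ ∈ G^0` with `m = 1 + κ(x m(x))`; `κ` is the generating series of free cumulants. -/
theorem stmt11 [Field A] [CharZero A] (m : Word → A) (hm : m [] = 1) :
    ∃! κ : Word → A, κ [] = 0 ∧ ∀ w, m w = one w + subst κ m w :=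
  stmt11_general m hm
end

section
/- Let m ∈ G^1 and let κ ∈ G^0 be the unique series with m = 1 + κ(x m(x)) (the free cumulant series of m). Then the inverse of m in the group (G^1, •) is the Cauchy multiplicative inverse of 1 + κ: m^{•−1} · (1 + κ) = 1 = (1 + κ) · m^{•−1}. -/
variable {A : Type*}

/-!
The substitution `f ↦ f(xg(x))` is multiplicative for the Cauchy product, and substitutions
compose through `•`: `f(xg(x))(xh(x)) = f(x (g • h)(x))`. Both facts follow by induction on the
length of words from the coefficient recursion `f(xg(x))(a w) = (g · (a⁻¹f)(xg(x)))(w)`, where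
`(a⁻¹f)(v) = f(av)`; this recursion is the only place where the combinatorics of subsets and gaps
enters. Hence `f ↦ f(xm(x))` and `f ↦ f(x m^{•−1}(x))` are mutually inverse. The cumulant
relation reads `m = (1 + κ)(xm(x))`, so `1 + κ = m(x m^{•−1}(x))` and
`m^{•−1} · (1 + κ) = m • m^{•−1} = 1`; on the other side, substituting `xm(x)` into
`(1 + κ) · m^{•−1}` gives `m · m^{•−1}(xm(x)) = m^{•−1} • m = 1`.
-/

section SubwordWhere

variable {α : Type*}

def subwordWhere (w : List α) (p : ℕ → Bool) : List α :=
  ((w.zipIdx.map Prod.swap).filter (fun q => p q.1)).map Prod.snd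

lemma subwordWhere_cons (a : α) (w : List α) (p : ℕ → Bool) :
    subwordWhere (a :: w) p = (if p 0 then [a] else []) ++ subwordWhere w (fun i => p (i + 1)) := by
  unfold subwordWhere
  rw [List.zipIdx_cons']
  by_cases h : p 0 <;> simp [h, List.filter_map, List.map_map, Function.comp_def]

lemma subwordWhere_congr {w : List α} {p q : ℕ → Bool} (h : ∀ i < w.length, p i = q i) :
    subwordWhere w p = subwordWhere w q := by
  induction w generalizing p q with
  | nil => rfl
  | cons a w ih =>
    rw [subwordWhere_cons, subwordWhere_cons, h 0 (by simp),
      ih fun i hi => h (i + 1) (by simpa using hi)]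

lemma subwordWhere_true (w : List α) : subwordWhere w (fun _ => true) = w := by
  induction w with
  | nil => rfl
  | cons a w ih => simpa [subwordWhere_cons] using ih

lemma subwordWhere_eq_nil_iff {w : List α} {p : ℕ → Bool} :
    subwordWhere w p = [] ↔ ∀ i < w.length, p i = false := by
  induction w generalizing p with
  | nil => simp [subwordWhere]
  | cons a w ih =>
    rw [subwordWhere_cons, List.append_eq_nil_iff, ih, List.length_cons, Nat.forall_lt_succ_left]
    cases p 0 <;> simp

lemma subwordWhere_drop (w : List α) (k : ℕ) (q : ℕ → Bool) :
    subwordWhere (w.drop k) q = subwordWhere w (fun i => decide (k ≤ i) && q (i - k)) := by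
  induction w generalizing k with
  | nil => simp [subwordWhere]
  | cons a w ih =>
    cases k with
    | zero => exact subwordWhere_congr fun i _ => by simp
    | succ k =>
      rw [List.drop_succ_cons, ih, subwordWhere_cons, if_neg (by simp), List.nil_append]
      exact subwordWhere_congr fun i _ => by simp

lemma subwordWhere_take (w : List α) (k : ℕ) :
    subwordWhere w (fun i => decide (i < k)) = w.take k := by
  induction w generalizing k with
  | nil => simp [subwordWhere]
  | cons a w ih =>
    cases k with
    | zero => simpa using subwordWhere_eq_nil_iff.2 fun i _ => by simp
    | succ k => simp [subwordWhere_cons, ih]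

end SubwordWhere

section Positions

lemma subword_eq_subwordWhere (w : Word) (S : Finset ℕ) :
    subword w S = subwordWhere w (fun i => decide (i ∈ S)) := rfl

lemma gapAfter_eq_subwordWhere (w : Word) (S : Finset ℕ) (s : ℕ) :
    gapAfter w S s = subwordWhere w (fun i => decide (s < i ∧ ∀ j ∈ S, j ≤ s ∨ i < j)) :=
  rfl

lemma subword_cons_singleton_zero (a : ℕ+) (w : Word) : subword (a :: w) {0} = [a] := by
  rw [subword_eq_subwordWhere, subwordWhere_cons, if_pos (by simp),
    subwordWhere_eq_nil_iff.2 fun i _ => by simp]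
  rfl

lemma gapAfter_cons_singleton_zero (a : ℕ+) (w : Word) : gapAfter (a :: w) {0} 0 = w := by
  rw [gapAfter_eq_subwordWhere, subwordWhere_cons, if_neg (by simp), List.nil_append,
    subwordWhere_congr (q := fun _ => true) fun i _ => by simp, subwordWhere_true]

lemma subword_cons_ne_nil (a : ℕ+) (w : Word) {S : Finset ℕ} (h0 : 0 ∈ S) :
    subword (a :: w) S ≠ [] := by
  simp [subword_eq_subwordWhere, subwordWhere_cons, h0]

/-- If `i ∉ S`, the gap after the last element of `S` below `i` contains position `i`. -/
lemma exists_gapAfter_ne_nil {w : Word} {S : Finset ℕ} (h0 : 0 ∈ S)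
    (hS : S ⊂ Finset.range w.length) : ∃ s ∈ S, gapAfter w S s ≠ [] := by
  obtain ⟨i, hi, hiS⟩ := Finset.exists_of_ssubset hS
  have hi0 : 0 < i := Nat.pos_of_ne_zero fun h => hiS (h ▸ h0)
  have hbefore : (S.filter (· < i)).Nonempty := ⟨0, Finset.mem_filter.2 ⟨h0, hi0⟩⟩
  obtain ⟨hsS, hsi⟩ := Finset.mem_filter.1 ((S.filter (· < i)).max'_mem hbefore)
  refine ⟨_, hsS, fun hgap => ?_⟩
  rw [gapAfter_eq_subwordWhere] at hgap
  have := subwordWhere_eq_nil_iff.1 hgap i (Finset.mem_range.1 hi)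
  refine (decide_eq_false_iff_not.1 this) ⟨hsi, fun j hj => ?_⟩
  rcases lt_or_ge j i with hji | hij
  · exact Or.inl ((S.filter (· < i)).le_max' j (Finset.mem_filter.2 ⟨hj, hji⟩))
  · exact Or.inr (lt_of_le_of_ne hij fun h => hiS (h ▸ hj))

/-- The positions in `a :: w` of the first letter followed by the positions `S` in `w.drop k`. -/
def consShift (k : ℕ) (S : Finset ℕ) : Finset ℕ := insert 0 (S.image (· + (k + 1)))

lemma subword_cons_consShift (a : ℕ+) (w : Word) (k : ℕ) (S : Finset ℕ) :
    subword (a :: w) (consShift k S) = a :: subword (w.drop k) S := by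
  rw [subword_eq_subwordWhere, subwordWhere_cons, if_pos (by simp [consShift]),
    subword_eq_subwordWhere, subwordWhere_drop, List.singleton_append]
  refine congrArg _ (subwordWhere_congr fun i _ => ?_)
  rw [← Bool.decide_and, decide_eq_decide]
  simp only [consShift, Finset.mem_insert, Finset.mem_image]
  constructor
  · rintro (h | ⟨t, ht, h⟩)
    · omega
    · exact ⟨by omega, by rwa [show i - k = t by omega]⟩
  · rintro ⟨hk, h⟩
    exact Or.inr ⟨i - k, h, by omega⟩

lemma gapAfter_cons_consShift_zero (a : ℕ+) (w : Word) (k : ℕ) {S : Finset ℕ} (h0 : 0 ∈ S) :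
    gapAfter (a :: w) (consShift k S) 0 = w.take k := by
  rw [gapAfter_eq_subwordWhere, subwordWhere_cons, if_neg (by simp), ← subwordWhere_take,
    List.nil_append]
  refine subwordWhere_congr fun i _ => decide_eq_decide.2 ?_
  simp only [consShift, Finset.mem_insert, Finset.mem_image]
  constructor
  · rintro ⟨-, h⟩
    rcases h (k + 1) (Or.inr ⟨0, h0, by omega⟩) with h' | h' <;> omega
  · intro hik
    refine ⟨by omega, ?_⟩
    rintro j (rfl | ⟨t, -, rfl⟩) <;> omega

lemma gapAfter_cons_consShift (a : ℕ+) (w : Word) (k : ℕ) (S : Finset ℕ) (s : ℕ) :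
    gapAfter (a :: w) (consShift k S) (s + (k + 1)) = gapAfter (w.drop k) S s := by
  rw [gapAfter_eq_subwordWhere, subwordWhere_cons, if_neg (by simp), gapAfter_eq_subwordWhere,
    subwordWhere_drop, List.nil_append]
  refine subwordWhere_congr fun i _ => ?_
  rw [← Bool.decide_and, decide_eq_decide]
  simp only [consShift, Finset.mem_insert, Finset.mem_image]
  constructor
  · rintro ⟨h1, h2⟩
    refine ⟨by omega, by omega, fun t ht => ?_⟩
    rcases h2 (t + (k + 1)) (Or.inr ⟨t, ht, rfl⟩) with h | h <;> omega
  · rintro ⟨hk, h1, h2⟩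
    refine ⟨by omega, ?_⟩
    rintro j (rfl | ⟨t, ht, rfl⟩)
    · omega
    · rcases h2 t ht with h | h <;> omega

lemma prod_gapAfter_cons_consShift {M : Type*} [CommMonoid M] (g : Word → M) (a : ℕ+) (w : Word)
    (k : ℕ) {S : Finset ℕ} (h0 : 0 ∈ S) :
    ∏ s ∈ consShift k S, g (gapAfter (a :: w) (consShift k S) s)
      = g (w.take k) * ∏ s ∈ S, g (gapAfter (w.drop k) S s) := by
  rw [consShift, Finset.prod_insert (by simp), ← consShift, gapAfter_cons_consShift_zero a w k h0,
    Finset.prod_image fun x _ y _ h => by simpa using h]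
  simp only [gapAfter_cons_consShift]

end Positions

section Reindexing

def subsetsWithZero (n : ℕ) : Finset (Finset ℕ) :=
  (Finset.range n).powerset.filter (fun S => 0 ∈ S)

lemma mem_subsetsWithZero {n : ℕ} {S : Finset ℕ} :
    S ∈ subsetsWithZero n ↔ S ⊆ Finset.range n ∧ 0 ∈ S := by
  simp [subsetsWithZero]

def secondPos (S : Finset ℕ) : ℕ := (S.erase 0).min.untopD 0

def unshift (S : Finset ℕ) : (_ : ℕ) × Finset ℕ :=
  ⟨secondPos S - 1, (S.erase 0).image (· - secondPos S)⟩

lemma secondPos_eq_min' {S : Finset ℕ} (h : (S.erase 0).Nonempty) :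
    secondPos S = (S.erase 0).min' h := by
  rw [secondPos, ← Finset.coe_min' h, WithTop.untopD_coe]

lemma secondPos_consShift (k : ℕ) {S : Finset ℕ} (h0 : 0 ∈ S) :
    secondPos (consShift k S) = k + 1 := by
  have hk : k + 1 ∈ (consShift k S).erase 0 := by simp [consShift, h0]
  rw [secondPos_eq_min' ⟨_, hk⟩]
  refine le_antisymm (Finset.min'_le _ _ hk) (Finset.le_min' _ _ _ fun y hy => ?_)
  simp only [consShift, Finset.mem_erase, Finset.mem_insert, Finset.mem_image] at hy
  omega

lemma secondPos_mem_and_le {S : Finset ℕ} (h0 : 0 ∈ S) (hne : S ≠ {0}) :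
    secondPos S ∈ S.erase 0 ∧ ∀ x ∈ S.erase 0, secondPos S ≤ x := by
  have hpos : (S.erase 0).Nonempty := by
    rw [Finset.nonempty_iff_ne_empty, Ne, Finset.erase_eq_empty_iff]
    rintro (rfl | rfl)
    exacts [Finset.notMem_empty 0 h0, hne rfl]
  rw [secondPos_eq_min' hpos]
  exact ⟨Finset.min'_mem _ _, fun x hx => Finset.min'_le _ _ hx⟩

lemma consShift_mem {n k : ℕ} {S : Finset ℕ} (hk : k < n) (hS : S ∈ subsetsWithZero (n - k)) :
    consShift k S ∈ (subsetsWithZero (n + 1)).erase {0} := by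
  obtain ⟨hS, h0⟩ := mem_subsetsWithZero.1 hS
  refine Finset.mem_erase.2
    ⟨fun h => ?_, mem_subsetsWithZero.2 ⟨fun x hx => ?_, by simp [consShift]⟩⟩
  · have : k + 1 ∈ consShift k S := by simp [consShift, h0]
    simp [h] at this
  · simp only [consShift, Finset.mem_insert, Finset.mem_image] at hx
    rcases hx with rfl | ⟨t, ht, rfl⟩
    · simp
    · have := Finset.mem_range.1 (hS ht)
      simp only [Finset.mem_range]
      omega

lemma unshift_mem {n : ℕ} {S : Finset ℕ} (hS : S ∈ (subsetsWithZero (n + 1)).erase {0}) :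
    unshift S ∈ (Finset.range n).sigma fun k => subsetsWithZero (n - k) := by
  unfold unshift
  obtain ⟨hne, hS⟩ := Finset.mem_erase.1 hS
  obtain ⟨hS, h0⟩ := mem_subsetsWithZero.1 hS
  obtain ⟨hmem, hmin⟩ := secondPos_mem_and_le h0 hne
  have hbound : ∀ x ∈ S.erase 0, 0 < x ∧ x < n + 1 := fun x hx =>
    ⟨Nat.pos_of_ne_zero (Finset.ne_of_mem_erase hx),
      Finset.mem_range.1 (hS (Finset.mem_of_mem_erase hx))⟩
  have hpos := hbound _ hmem
  rw [Finset.mem_sigma]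
  dsimp only
  refine ⟨Finset.mem_range.2 (by omega),
    mem_subsetsWithZero.2 ⟨fun y hy => ?_, Finset.mem_image.2 ⟨_, hmem, by simp⟩⟩⟩
  obtain ⟨x, hx, rfl⟩ := Finset.mem_image.1 hy
  have := hbound x hx
  have := hmin x hx
  simp only [Finset.mem_range]
  omega

lemma consShift_unshift {S : Finset ℕ} (h0 : 0 ∈ S) (hne : S ≠ {0}) :
    consShift (unshift S).1 (unshift S).2 = S := by
  obtain ⟨hmem, hmin⟩ := secondPos_mem_and_le h0 hne
  have h1 : secondPos S - 1 + 1 = secondPos S := by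
    have := Finset.ne_of_mem_erase hmem
    omega
  simp only [unshift, consShift, h1, Finset.image_image]
  rw [Finset.image_congr (g := id) fun x hx => by simp [Nat.sub_add_cancel (hmin x hx)],
    Finset.image_id, Finset.insert_erase h0]

lemma unshift_consShift (k : ℕ) {S : Finset ℕ} (h0 : 0 ∈ S) :
    unshift (consShift k S) = ⟨k, S⟩ := by
  have h0' : (0 : ℕ) ∉ S.image (· + (k + 1)) := by simp
  rw [unshift, secondPos_consShift k h0]
  simp only [consShift, Finset.erase_insert h0', Finset.image_image]
  simp [Function.comp_def]

lemma sum_erase_singleton_zero_subsetsWithZero {M : Type*} [AddCommMonoid M] (n : ℕ)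
    (F : Finset ℕ → M) :
    ∑ S ∈ (subsetsWithZero (n + 1)).erase {0}, F S
      = ∑ k ∈ Finset.range n, ∑ S ∈ subsetsWithZero (n - k), F (consShift k S) := by
  rw [Finset.sum_sigma']
  refine (Finset.sum_nbij' (fun x : (_ : ℕ) × Finset ℕ => consShift x.1 x.2) unshift
    ?_ ?_ ?_ ?_ fun _ _ => rfl).symm
  · rintro ⟨k, S⟩ hkS
    obtain ⟨hk, hS⟩ := Finset.mem_sigma.1 hkS
    exact consShift_mem (Finset.mem_range.1 hk) hS
  · exact fun S hS => unshift_mem hS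
  · rintro ⟨k, S⟩ hkS
    exact unshift_consShift k (mem_subsetsWithZero.1 (Finset.mem_sigma.1 hkS).2).2
  · intro S hS
    obtain ⟨hne, hS⟩ := Finset.mem_erase.1 hS
    exact consShift_unshift (mem_subsetsWithZero.1 hS).2 hne

end Reindexing

section Cauchy

variable [CommRing A]

lemma cauchy_nil (f g : Word → A) : cauchy f g [] = f [] * g [] := by
  simp [cauchy]

lemma cauchy_cons (f g : Word → A) (a : ℕ+) (w : Word) :
    cauchy f g (a :: w) = f [] * g (a :: w) + cauchy (fun u => f (a :: u)) g w := by
  rw [cauchy, List.length_cons, Finset.sum_range_succ', add_comm]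
  rfl

lemma cauchy_cons_eq (f g : Word → A) (a : ℕ+) :
    (fun w => cauchy f g (a :: w))
      = f [] • (fun w => g (a :: w)) + cauchy (fun u => f (a :: u)) g :=
  funext (cauchy_cons f g a)

lemma cauchy_add_left (f₁ f₂ g : Word → A) :
    cauchy (f₁ + f₂) g = cauchy f₁ g + cauchy f₂ g := by
  ext w
  simp only [cauchy, Pi.add_apply, add_mul, Finset.sum_add_distrib]

lemma cauchy_smul_left (c : A) (f g : Word → A) : cauchy (c • f) g = c • cauchy f g := by
  ext w
  simp only [cauchy, Pi.smul_apply, smul_eq_mul, Finset.mul_sum, mul_assoc]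

lemma cauchy_add_right (f g₁ g₂ : Word → A) :
    cauchy f (g₁ + g₂) = cauchy f g₁ + cauchy f g₂ := by
  ext w
  simp only [cauchy, Pi.add_apply, mul_add, Finset.sum_add_distrib]

lemma cauchy_smul_right (c : A) (f g : Word → A) : cauchy f (c • g) = c • cauchy f g := by
  ext w
  simp only [cauchy, Pi.smul_apply, smul_eq_mul, Finset.mul_sum, mul_left_comm]

lemma cauchy_assoc (f g h : Word → A) : cauchy (cauchy f g) h = cauchy f (cauchy g h) := by
  ext w
  induction w generalizing f with
  | nil => simp only [cauchy_nil, mul_assoc]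
  | cons a w ih =>
    rw [cauchy_cons, cauchy_cons_eq, cauchy_add_left, cauchy_smul_left, cauchy_nil, cauchy_cons,
      cauchy_cons]
    simp only [Pi.add_apply, Pi.smul_apply, smul_eq_mul, ih]
    ring

lemma cauchy_congr_right (f : Word → A) {g g' : Word → A} {w : Word}
    (h : ∀ v : Word, v.length ≤ w.length → g v = g' v) : cauchy f g w = cauchy f g' w :=
  Finset.sum_congr rfl fun k _ => by rw [h (w.drop k) (by simp)]

end Cauchy

section Subst

variable [CommRing A]

lemma subst_add (f₁ f₂ g : Word → A) :
    subst (f₁ + f₂) g = subst f₁ g + subst f₂ g := by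
  ext w
  simp only [subst, Pi.add_apply]
  split_ifs
  · rfl
  · simp only [add_mul, Finset.sum_add_distrib]

lemma subst_smul (c : A) (f g : Word → A) : subst (c • f) g = c • subst f g := by
  ext w
  simp only [subst, Pi.smul_apply, smul_eq_mul]
  split_ifs
  · rfl
  · simp only [Finset.mul_sum, mul_assoc]

lemma subst_one_left (g : Word → A) : subst one g = one := by
  ext w
  cases w with
  | nil => rfl
  | cons a w =>
    rw [subst, if_neg (List.cons_ne_nil a w)]
    refine (Finset.sum_eq_zero fun S hS => ?_).trans (if_neg (List.cons_ne_nil a w)).symm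
    simp [one, subword_cons_ne_nil a w (Finset.mem_filter.1 hS).2]

lemma subst_one_right (f : Word → A) : subst f one = f := by
  ext w
  cases w with
  | nil => rfl
  | cons a w =>
    rw [subst, if_neg (List.cons_ne_nil a w), Finset.sum_eq_single_of_mem
      (Finset.range (a :: w).length) (by simp) fun S hS hne => ?_]
    · simp only [subword_range_length, gapAfter_range_length, one, ↓reduceIte,
        Finset.prod_const_one, mul_one]
    · obtain ⟨hS, h0⟩ := mem_subsetsWithZero.1 hS
      obtain ⟨s, hs, hgap⟩ := exists_gapAfter_ne_nil h0 (lt_of_le_of_ne hS hne)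
      rw [Finset.prod_eq_zero hs (if_neg hgap), mul_zero]

lemma subst_cons_eq_add_sum (f g : Word → A) (a : ℕ+) (w : Word) :
    subst f g (a :: w) = f [a] * g w + ∑ S ∈ (subsetsWithZero (w.length + 1)).erase {0},
      f (subword (a :: w) S) * ∏ s ∈ S, g (gapAfter (a :: w) S s) := by
  rw [subst, if_neg (List.cons_ne_nil a w), List.length_cons, ← subsetsWithZero,
    ← Finset.add_sum_erase _ _ (mem_subsetsWithZero.2 ⟨by simp, Finset.mem_singleton_self 0⟩ :
      {0} ∈ subsetsWithZero (w.length + 1)),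
    subword_cons_singleton_zero, Finset.prod_singleton, gapAfter_cons_singleton_zero]

lemma subst_cons (f g : Word → A) (a : ℕ+) (w : Word) :
    subst f g (a :: w) = cauchy g (subst (fun v => f (a :: v)) g) w := by
  rw [subst_cons_eq_add_sum, sum_erase_singleton_zero_subsetsWithZero, cauchy,
    Finset.sum_range_succ, List.take_length, List.drop_length, add_comm]
  refine congrArg₂ _ (Finset.sum_congr rfl fun k hk => ?_) (mul_comm _ _)
  have hne : w.drop k ≠ [] := by simpa using Finset.mem_range.1 hk
  rw [subst, if_neg hne, List.length_drop, ← subsetsWithZero, Finset.mul_sum]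
  refine Finset.sum_congr rfl fun S hS => ?_
  rw [subword_cons_consShift, prod_gapAfter_cons_consShift g a w k (mem_subsetsWithZero.1 hS).2]
  ring

lemma subst_cons_eq (f g : Word → A) (a : ℕ+) :
    (fun w => subst f g (a :: w)) = cauchy g (subst (fun v => f (a :: v)) g) :=
  funext (subst_cons f g a)

lemma subst_cauchy_apply (p q h : Word → A) :
    ∀ w, subst (cauchy p q) h w = cauchy (subst p h) (subst q h) w
  | [] => (cauchy_nil p q).trans (cauchy_nil _ _).symm
  | a :: w => by
    have ih : ∀ v : Word, v.length ≤ w.length →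
        subst (cauchy (fun u => p (a :: u)) q) h v
          = cauchy (subst (fun u => p (a :: u)) h) (subst q h) v :=
      fun v _ => subst_cauchy_apply _ q h v
    rw [subst_cons, cauchy_cons_eq, subst_add, subst_smul, cauchy_add_right, cauchy_smul_right,
      Pi.add_apply, Pi.smul_apply, cauchy_congr_right h ih, ← cauchy_assoc, cauchy_cons,
      subst_cons_eq, subst_cons]
    rfl
termination_by w => w.length

lemma subst_cauchy (p q h : Word → A) : subst (cauchy p q) h = cauchy (subst p h) (subst q h) :=
  funext (subst_cauchy_apply p q h)

lemma subst_subst_apply (g h : Word → A) :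
    ∀ (f : Word → A) (w : Word), subst (subst f g) h w = subst f (bullet g h) w
  | f, [] => rfl
  | f, a :: w => by
    have ih : ∀ v : Word, v.length ≤ w.length →
        cauchy (subst g h) (subst (subst (fun u => f (a :: u)) g) h) v
          = cauchy (subst g h) (subst (fun u => f (a :: u)) (bullet g h)) v :=
      fun _ _ => cauchy_congr_right _ fun u _ => subst_subst_apply g h _ u
    rw [subst_cons, subst_cons_eq, subst_cauchy, cauchy_congr_right h ih, ← cauchy_assoc,
      subst_cons]
    rfl
termination_by _ w => w.length

lemma subst_subst (f g h : Word → A) : subst (subst f g) h = subst f (bullet g h) :=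
  funext (subst_subst_apply g h f)

lemma subst_subst_of_bullet_eq_one {g h : Word → A} (hgh : bullet g h = one) (f : Word → A) :
    subst (subst f g) h = f := by
  rw [subst_subst, hgh, subst_one_right]

end Subst

theorem stmt12_general [Field A] (m κ minv : Word → A)
    (hmc : ∀ w, m w = one w + subst κ m w)
    (hinv₁ : bullet minv m = one) (hinv₂ : bullet m minv = one) :
    cauchy minv (fun w => one w + κ w) = one ∧
    cauchy (fun w => one w + κ w) minv = one := by
  have hm : subst (one + κ) m = m := by
    rw [subst_add, subst_one_left]
    exact (funext hmc).symm
  have hmκ : subst m minv = one + κ := by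
    rw [← subst_subst_of_bullet_eq_one hinv₂ (one + κ), hm]
  refine ⟨?_, ?_⟩
  · change cauchy minv (one + κ) = one
    rw [← hmκ]
    exact hinv₂
  · calc cauchy (one + κ) minv = subst (subst (cauchy (one + κ) minv) m) minv :=
          (subst_subst_of_bullet_eq_one hinv₂ _).symm
      _ = one := by rw [subst_cauchy, hm, ← bullet, hinv₁, subst_one_left]

/-- if `κ ∈ G^0` is the free cumulant series of `m ∈ G^1` (that is,
`m = 1 + κ(x m(x))`) and `m⁻¹` is the `•`-inverse of `m` in the group `(G^1, •)`, then
`m⁻¹` is the Cauchy multiplicative inverse of `1 + κ`. -/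
theorem stmt12 [Field A] [CharZero A] (m κ minv : Word → A)
    (hm : m [] = 1) (hκ : κ [] = 0) (hmc : ∀ w, m w = one w + subst κ m w)
    (hminv : minv [] = 1) (hinv₁ : bullet minv m = one) (hinv₂ : bullet m minv = one) :
    cauchy minv (fun w => one w + κ w) = one ∧
    cauchy (fun w => one w + κ w) minv = one :=
  stmt12_general m κ minv hmc hinv₁ hinv₂
end
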